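/- For any connected non-trivial graph G of order n and any n ≥ 5, the corona product G⊙C_n (every copy is the cycle C_n) is 4-metric dimensional. -/

import Mathlib

/-!
In `G ⊙ C_m` two distinct vertices `x`, `y` are distinguished by `x`, by `y`, and by every
vertex adjacent to exactly one of them. For `m ≥ 5` every pair has at least two such
neighbours besides `x` and `y`, so the whole vertex set is a 4-metric generator.
Conversely, the copy of `C_m` at `v` is attached to the rest of the graph only through `v`,
so two adjacent cycle vertices `a`, `b` in it are distinguished only by vertices of
`N(a) ∪ N(b)`, a set with at most four elements.
-/


open SimpleGraph

/-- `S` is a `k`-metric generator for `G`: every pair of distinct vertices is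
distinguished (has different distances) by at least `k` vertices of `S`. -/
def kMetricGen {V : Type*} [Fintype V] (G : SimpleGraph V) (k : ℕ) (S : Set V) : Prop :=
  ∀ u v : V, u ≠ v → ∃ T : Finset V, ↑T ⊆ S ∧ k ≤ T.card ∧ ∀ w ∈ T, G.dist u w ≠ G.dist v w

/-- `G` is `k`-metric dimensional: `k` is the largest integer admitting a `k`-metric generator. -/
def kMetricDimensional {V : Type*} [Fintype V] (G : SimpleGraph V) (k : ℕ) : Prop :=
  (∃ S : Set V, kMetricGen G k S) ∧ ∀ k' : ℕ, (∃ S : Set V, kMetricGen G k' S) → k' ≤ k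

/-- The `k`-metric dimension of `G`. -/
noncomputable def kMetricDim {V : Type*} [Fintype V] (G : SimpleGraph V) (k : ℕ) : ℕ :=
  sInf {m | ∃ S : Finset V, kMetricGen G k ↑S ∧ S.card = m}

/-- A `k`-metric basis: a minimum-cardinality `k`-metric generator. -/
def kMetricBasis {V : Type*} [Fintype V] (G : SimpleGraph V) (k : ℕ) (B : Finset V) : Prop :=
  kMetricGen G k ↑B ∧ ∀ T : Finset V, kMetricGen G k ↑T → B.card ≤ T.card

/-- Auxiliary relation for the corona product. -/
def coronaRel {V : Type*} {W : V → Type*} (G : SimpleGraph V) (H : ∀ v, SimpleGraph (W v)) :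
    (V ⊕ (Σ v, W v)) → (V ⊕ (Σ v, W v)) → Prop
  | Sum.inl a, Sum.inl b => G.Adj a b
  | Sum.inl a, Sum.inr b => a = b.1
  | Sum.inr a, Sum.inr b => ∃ h : a.1 = b.1, (H b.1).Adj (h ▸ a.2) b.2
  | _, _ => False

/-- The corona product `G ⊙ 𝓗`: one copy of `G`, and each vertex `v` of `G` joined by an
edge to every vertex of its own copy of `H v`. -/
def corona {V : Type*} {W : V → Type*} (G : SimpleGraph V) (H : ∀ v, SimpleGraph (W v)) :
    SimpleGraph (V ⊕ (Σ v, W v)) :=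
  SimpleGraph.fromRel (coronaRel G H)

/-- The join `K₁ + H`: a new vertex (`none`) adjacent to every vertex of `H`. -/
def K1join {U : Type*} (H : SimpleGraph U) : SimpleGraph (Option U) :=
  SimpleGraph.fromRel (fun x y => match x, y with
    | none, some _ => True
    | some a, some b => H.Adj a b
    | _, _ => False)

/-- `𝒞(H) = min_{x ≠ y} |(N(x) △ N(y)) ∪ {x,y}|`. -/
noncomputable def CC {U : Type*} (H : SimpleGraph U) : ℕ :=
  sInf {m | ∃ x y : U, x ≠ y ∧
    (symmDiff (H.neighborSet x) (H.neighborSet y) ∪ {x, y}).ncard = m}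

open Finset

namespace SimpleGraph

variable {V : Type*} {G : SimpleGraph V}

lemma Walk.dist_add_one_le_length {S : Set V} {s : V}
    (hS : ∀ x ∈ S, ∀ y, G.Adj x y → y ∈ S ∨ y = s) {x w : V} (p : G.Walk x w)
    (hx : x ∈ S) (hw : w ∉ S) : G.dist s w + 1 ≤ p.length := by
  induction p with
  | nil => exact absurd hx hw
  | cons h q ih =>
    rw [length_cons]
    rcases hS _ hx _ h with hy | rfl
    · exact (ih hy hw).trans (Nat.le_succ _)
    · exact Nat.succ_le_succ (dist_le q)

lemma dist_eq_dist_add_one_of_forall_adj {S : Set V} {s : V}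
    (hS : ∀ x ∈ S, ∀ y, G.Adj x y → y ∈ S ∨ y = s) {x w : V} (hx : x ∈ S) (hw : w ∉ S)
    (hxs : G.Adj x s) (hxw : G.Reachable x w) : G.dist x w = G.dist s w + 1 := by
  apply le_antisymm
  · obtain ⟨p, hp⟩ := (hxs.reachable.symm.trans hxw).exists_walk_length_eq_dist
    simpa [hp] using dist_le (Walk.cons hxs p)
  · obtain ⟨p, hp⟩ := hxw.exists_walk_length_eq_dist
    exact hp ▸ p.dist_add_one_le_length hS hx hw

variable [Fintype V]

noncomputable def distinguishers (G : SimpleGraph V) (x y : V) : Finset V :=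
  {w | G.dist x w ≠ G.dist y w}

@[simp]
lemma mem_distinguishers {x y w : V} : w ∈ G.distinguishers x y ↔ G.dist x w ≠ G.dist y w := by
  simp [distinguishers]

lemma distinguishers_comm (x y : V) : G.distinguishers x y = G.distinguishers y x := by
  ext w
  simp [ne_comm]

lemma mem_distinguishers_of_adj_of_not_adj {x y w : V} (hx : G.Adj x w) (hy : ¬G.Adj y w) :
    w ∈ G.distinguishers x y := by
  rw [mem_distinguishers, dist_eq_one_iff_adj.mpr hx]
  exact fun h => hy (dist_eq_one_iff_adj.mp h.symm)

lemma Reachable.left_mem_distinguishers {x y : V} (h : G.Reachable x y) (hne : x ≠ y) :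
    x ∈ G.distinguishers x y := by
  rw [mem_distinguishers, dist_self, dist_comm]
  exact (h.pos_dist_of_ne hne).ne

lemma Reachable.four_le_card_distinguishers {x y w₁ w₂ : V} (h : G.Reachable x y) (hxy : x ≠ y)
    (hw₁x : w₁ ≠ x) (hw₁y : w₁ ≠ y) (hw₂x : w₂ ≠ x) (hw₂y : w₂ ≠ y) (hw : w₁ ≠ w₂)
    (h₁ : w₁ ∈ G.distinguishers x y) (h₂ : w₂ ∈ G.distinguishers x y) :
    4 ≤ #(G.distinguishers x y) := by
  classical
  have hx := h.left_mem_distinguishers hxy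
  have hy : y ∈ G.distinguishers x y := by
    rw [distinguishers_comm]
    exact h.symm.left_mem_distinguishers hxy.symm
  calc 4 = #{x, y, w₁, w₂} := (card_eq_four.mpr
        ⟨x, y, w₁, w₂, hxy, hw₁x.symm, hw₂x.symm, hw₁y.symm, hw₂y.symm, hw, rfl⟩).symm
    _ ≤ _ := card_le_card (by simp [insert_subset_iff, hx, hy, h₁, h₂])

lemma kMetricDimensional_of_le_card_distinguishers {k : ℕ}
    (hle : ∀ x y, x ≠ y → k ≤ #(G.distinguishers x y))
    (hge : ∃ x y, x ≠ y ∧ #(G.distinguishers x y) ≤ k) : kMetricDimensional G k := by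
  refine ⟨⟨Set.univ, fun x y hxy =>
    ⟨_, Set.subset_univ _, hle x y hxy, fun w hw => mem_distinguishers.mp hw⟩⟩, ?_⟩
  rintro k' ⟨S, hS⟩
  obtain ⟨x, y, hxy, hcard⟩ := hge
  obtain ⟨T, -, hk', hT⟩ := hS x y hxy
  calc k' ≤ #T := hk'
    _ ≤ #(G.distinguishers x y) := card_le_card fun w hw => mem_distinguishers.mpr (hT w hw)
    _ ≤ k := hcard

end SimpleGraph

section Corona

variable {V : Type*} {W : V → Type*} {G : SimpleGraph V} {H : ∀ v, SimpleGraph (W v)}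

@[simp]
lemma corona_adj_inl_inl {u v : V} : (corona G H).Adj (.inl u) (.inl v) ↔ G.Adj u v := by
  simp only [corona, fromRel_adj, coronaRel, ne_eq, Sum.inl.injEq]
  exact ⟨fun ⟨_, h⟩ => h.elim id .symm, fun h => ⟨h.ne, .inl h⟩⟩

@[simp]
lemma corona_adj_inl_inr {u v : V} {b : W v} :
    (corona G H).Adj (.inl u) (.inr ⟨v, b⟩) ↔ u = v := by
  simp [corona, coronaRel]

@[simp]
lemma corona_adj_inr_inl {u v : V} {a : W u} :
    (corona G H).Adj (.inr ⟨u, a⟩) (.inl v) ↔ u = v := by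
  rw [adj_comm, corona_adj_inl_inr, eq_comm]

lemma corona_adj_inr_inr {u v : V} {a : W u} {b : W v} :
    (corona G H).Adj (.inr ⟨u, a⟩) (.inr ⟨v, b⟩) ↔ ∃ h : u = v, (H v).Adj (h ▸ a) b := by
  simp only [corona, fromRel_adj, coronaRel]
  constructor
  · rintro ⟨-, ⟨rfl, h⟩ | ⟨rfl, h⟩⟩
    exacts [⟨rfl, h⟩, ⟨rfl, h.symm⟩]
  · rintro ⟨rfl, h⟩
    exact ⟨fun he => h.ne (by simpa using he), .inl ⟨rfl, h⟩⟩

@[simp]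
lemma corona_adj_inr_inr_self {v : V} {a b : W v} :
    (corona G H).Adj (.inr ⟨v, a⟩) (.inr ⟨v, b⟩) ↔ (H v).Adj a b := by
  simp [corona_adj_inr_inr]

lemma corona_connected (hG : G.Connected) : (corona G H).Connected := by
  have hinl (u v : V) : (corona G H).Reachable (.inl u) (.inl v) :=
    (hG u v).map ⟨Sum.inl, corona_adj_inl_inl.mpr⟩
  obtain ⟨v₀⟩ := hG.nonempty
  refine (connected_iff_exists_forall_reachable _).mpr ⟨.inl v₀, ?_⟩
  rintro (u | ⟨u, c⟩)
  · exact hinl v₀ u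
  · exact (hinl v₀ u).trans (corona_adj_inl_inr.mpr rfl).reachable

lemma corona_dist_inr_inr_of_not_adj {v : V} {a b : W v} (hab : a ≠ b) (h : ¬(H v).Adj a b) :
    (corona G H).dist (.inr ⟨v, a⟩) (.inr ⟨v, b⟩) = 2 := by
  have ha : (corona G H).Adj (.inr ⟨v, a⟩) (.inl v) := corona_adj_inr_inl.mpr rfl
  have hb : (corona G H).Adj (.inl v) (.inr ⟨v, b⟩) := corona_adj_inl_inr.mpr rfl
  have hle := dist_le (Walk.cons ha (Walk.cons hb Walk.nil))
  have hpos := (ha.reachable.trans hb.reachable).pos_dist_of_ne (by simpa using hab)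
  have hne : (corona G H).dist (.inr ⟨v, a⟩) (.inr ⟨v, b⟩) ≠ 1 := by
    rwa [Ne, dist_eq_one_iff_adj, corona_adj_inr_inr_self]
  simp only [Walk.length_cons, Walk.length_nil] at hle
  omega

lemma corona_dist_inr_of_forall_ne (hG : G.Connected) {v : V} (a : W v)
    {w : V ⊕ Σ v, W v} (hw : ∀ c, w ≠ .inr ⟨v, c⟩) :
    (corona G H).dist (.inr ⟨v, a⟩) w = (corona G H).dist (.inl v) w + 1 := by
  refine dist_eq_dist_add_one_of_forall_adj (S := Set.range fun c => .inr ⟨v, c⟩) ?_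
    ⟨a, rfl⟩ (by rintro ⟨c, rfl⟩; exact hw c rfl) (corona_adj_inr_inl.mpr rfl)
    ((corona_connected hG).preconnected _ _)
  rintro _ ⟨c, rfl⟩ (t | ⟨t, d⟩) h
  · exact .inr (by rw [corona_adj_inr_inl.mp h])
  · obtain ⟨rfl, -⟩ := corona_adj_inr_inr.mp h
    exact .inl ⟨d, rfl⟩

variable [Fintype V] [∀ v, Fintype (W v)]

lemma card_distinguishers_corona_inr_inr_le (hG : G.Connected) {v : V} {a b : W v}
    (hab : (H v).Adj a b) [Fintype ((H v).neighborSet a)] [Fintype ((H v).neighborSet b)] :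
    #((corona G H).distinguishers (.inr ⟨v, a⟩) (.inr ⟨v, b⟩)) ≤
      (H v).degree a + (H v).degree b := by
  classical
  have hsub : (corona G H).distinguishers (.inr ⟨v, a⟩) (.inr ⟨v, b⟩) ⊆
      ((H v).neighborFinset a ∪ (H v).neighborFinset b).image fun c => .inr ⟨v, c⟩ := by
    intro w hw
    rw [mem_distinguishers] at hw
    by_cases hcopy : ∃ c, w = .inr ⟨v, c⟩
    · obtain ⟨c, rfl⟩ := hcopy
      refine mem_image_of_mem _ ?_
      by_contra hc
      simp only [mem_union, mem_neighborFinset, not_or] at hc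
      have hac : a ≠ c := by rintro rfl; exact hc.2 hab.symm
      rw [corona_dist_inr_inr_of_not_adj hac hc.1,
        corona_dist_inr_inr_of_not_adj (by rintro rfl; exact hc.1 hab) hc.2] at hw
      exact hw rfl
    · simp only [not_exists] at hcopy
      rw [corona_dist_inr_of_forall_ne hG a hcopy, corona_dist_inr_of_forall_ne hG b hcopy] at hw
      exact (hw rfl).elim
  calc _ ≤ _ := card_le_card hsub
    _ ≤ _ := card_image_le
    _ ≤ _ := card_union_le _ _

lemma card_le_card_distinguishers_corona_inl {u : V} {y : V ⊕ Σ v, W v}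
    (hy : ∀ c, ¬(corona G H).Adj y (.inr ⟨u, c⟩)) :
    Fintype.card (W u) ≤ #((corona G H).distinguishers (.inl u) y) := by
  classical
  calc Fintype.card (W u)
        = #(univ.map ⟨fun c => .inr ⟨u, c⟩, fun c d h => by simpa using h⟩) := by
          rw [card_map, card_univ]
    _ ≤ _ := card_le_card fun w hw => by
        obtain ⟨c, -, rfl⟩ := mem_map.mp hw
        exact mem_distinguishers_of_adj_of_not_adj (corona_adj_inl_inr.mpr rfl) (hy c)

lemma four_le_card_distinguishers_corona_inl_inr_self (hG : G.Connected) {u : V}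
    {b c c' : W u} (hc : c ≠ b) (hc' : c' ≠ b) (hcc' : c ≠ c') (hbc : ¬(H u).Adj b c)
    (hbc' : ¬(H u).Adj b c') :
    4 ≤ #((corona G H).distinguishers (.inl u) (.inr ⟨u, b⟩)) :=
  ((corona_connected hG).preconnected _ _).four_le_card_distinguishers
    (w₁ := .inr ⟨u, c⟩) (w₂ := .inr ⟨u, c'⟩) (by simp) (by simp)
    (by simpa using hc) (by simp) (by simpa using hc') (by simpa using hcc')
    (mem_distinguishers_of_adj_of_not_adj (by simp) (by simpa using hbc))
    (mem_distinguishers_of_adj_of_not_adj (by simp) (by simpa using hbc'))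

lemma four_le_card_distinguishers_corona_inr_inr_of_ne (hG : G.Connected) {u v : V}
    (huv : u ≠ v) (a : W u) (b : W v) :
    4 ≤ #((corona G H).distinguishers (.inr ⟨u, a⟩) (.inr ⟨v, b⟩)) :=
  ((corona_connected hG).preconnected _ _).four_le_card_distinguishers
    (w₁ := .inl u) (w₂ := .inl v) (by simp [huv]) (by simp)
    (by simp) (by simp) (by simp) (by simpa using huv)
    (mem_distinguishers_of_adj_of_not_adj (by simp) (by simpa using huv.symm))
    (by
      rw [distinguishers_comm]
      exact mem_distinguishers_of_adj_of_not_adj (by simp) (by simpa using huv))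

lemma four_le_card_distinguishers_corona_inr_inr_self (hG : G.Connected) {v : V}
    {a b c c' : W v} (hab : a ≠ b) (hac : (H v).Adj a c) (hbc : ¬(H v).Adj b c) (hcb : c ≠ b)
    (hbc' : (H v).Adj b c') (hac' : ¬(H v).Adj a c') (hc'a : c' ≠ a) :
    4 ≤ #((corona G H).distinguishers (.inr ⟨v, a⟩) (.inr ⟨v, b⟩)) :=
  ((corona_connected hG).preconnected _ _).four_le_card_distinguishers
    (w₁ := .inr ⟨v, c⟩) (w₂ := .inr ⟨v, c'⟩) (by simpa using hab)
    (by simpa using hac.ne.symm) (by simpa using hcb) (by simpa using hc'a)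
    (by simpa using hbc'.ne.symm) (by rintro ⟨⟩; exact hbc hbc')
    (mem_distinguishers_of_adj_of_not_adj (by simpa using hac) (by simpa using hbc))
    (by
      rw [distinguishers_comm]
      exact mem_distinguishers_of_adj_of_not_adj (by simpa using hbc') (by simpa using hac'))

end Corona

section CycleGraph

variable {m : ℕ}

-- Stated on values so that `omega` can reason about adjacency.
lemma cycleGraph_adj_iff_val {a b : Fin m} :
    (cycleGraph m).Adj a b ↔ a.val = b.val + 1 ∨ b.val = a.val + 1 ∨
      (a.val < b.val ∧ m + a.val = b.val + 1) ∨ (b.val < a.val ∧ m + b.val = a.val + 1) := by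
  rw [cycleGraph_adj']
  rcases lt_trichotomy a b with hab | rfl | hba
  · rw [Fin.coe_sub_iff_lt.mpr hab, Fin.coe_sub_iff_le.mpr hab.le]
    omega
  · rw [Fin.coe_sub_iff_le.mpr le_rfl]
    omega
  · rw [Fin.coe_sub_iff_le.mpr hba.le, Fin.coe_sub_iff_lt.mpr hba]
    omega

lemma cycleGraph_degree (hm : 3 ≤ m) (a : Fin m) : (cycleGraph m).degree a = 2 := by
  obtain ⟨n, rfl⟩ := Nat.exists_eq_add_of_le' hm
  exact cycleGraph_degree_three_le

lemma cycleGraph_exists_not_adj_not_adj (hm : 5 ≤ m) (b : Fin m) :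
    ∃ c c', c ≠ b ∧ c' ≠ b ∧ c ≠ c' ∧ ¬(cycleGraph m).Adj b c ∧ ¬(cycleGraph m).Adj b c' := by
  have hdeg : 1 < (cycleGraph m)ᶜ.degree b := by
    rw [degree_compl, Fintype.card_fin, cycleGraph_degree (by omega)]
    omega
  obtain ⟨c, hc, c', hc', hcc'⟩ := one_lt_card.mp hdeg
  simp only [mem_neighborFinset, compl_adj] at hc hc'
  exact ⟨c, c', hc.1.symm, hc'.1.symm, hcc', hc.2, hc'.2⟩

lemma cycleGraph_exists_adj_not_adj (hm : 5 ≤ m) {a b : Fin m} (hab : a ≠ b) :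
    ∃ c, (cycleGraph m).Adj a c ∧ ¬(cycleGraph m).Adj b c ∧ c ≠ b := by
  have ha := a.isLt
  have hb := b.isLt
  have hab' : a.val ≠ b.val := Fin.val_ne_of_ne hab
  -- One of the two neighbours `s`, `p` of `a` works: if both lay in the closed neighbourhood
  -- of `b ≠ a`, the cycle would have at most four vertices.
  obtain ⟨s, hs⟩ : ∃ s : Fin m, s.val = if a.val + 1 < m then a.val + 1 else 0 :=
    ⟨⟨if a.val + 1 < m then a.val + 1 else 0, by split_ifs <;> omega⟩, rfl⟩
  obtain ⟨p, hp⟩ : ∃ p : Fin m, p.val = if 0 < a.val then a.val - 1 else m - 1 :=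
    ⟨⟨if 0 < a.val then a.val - 1 else m - 1, by split_ifs <;> omega⟩, rfl⟩
  by_cases hsb : ¬(cycleGraph m).Adj b s ∧ s ≠ b
  · exact ⟨s, cycleGraph_adj_iff_val.mpr (by split_ifs at hs <;> omega), hsb⟩
  · simp only [cycleGraph_adj_iff_val, ne_eq, Fin.ext_iff] at hsb ⊢
    exact ⟨p, by split_ifs at hs hp <;> omega⟩

variable {V : Type*} [Fintype V] {G : SimpleGraph V}

lemma four_le_card_distinguishers_corona_cycleGraph_inl (hG : G.Connected) (hm : 5 ≤ m)
    (u : V) {y : V ⊕ Σ _ : V, Fin m} (hy : .inl u ≠ y) :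
    4 ≤ #((corona G fun _ => cycleGraph m).distinguishers (.inl u) y) := by
  have hcard : 4 ≤ Fintype.card (Fin m) := by rw [Fintype.card_fin]; omega
  rcases y with v | ⟨v, b⟩
  · refine hcard.trans
      (card_le_card_distinguishers_corona_inl (H := fun _ => cycleGraph m) fun c => ?_)
    simpa [eq_comm] using hy
  · obtain rfl | huv := eq_or_ne u v
    · obtain ⟨c, c', hc, hc', hcc', hbc, hbc'⟩ := cycleGraph_exists_not_adj_not_adj hm b
      exact four_le_card_distinguishers_corona_inl_inr_self hG hc hc' hcc' hbc hbc'
    · refine hcard.trans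
        (card_le_card_distinguishers_corona_inl (H := fun _ => cycleGraph m) fun c => ?_)
      simp [corona_adj_inr_inr, huv.symm]

lemma four_le_card_distinguishers_corona_cycleGraph (hG : G.Connected) (hm : 5 ≤ m)
    {x y : V ⊕ Σ _ : V, Fin m} (hxy : x ≠ y) :
    4 ≤ #((corona G fun _ => cycleGraph m).distinguishers x y) := by
  rcases x with u | ⟨u, a⟩
  · exact four_le_card_distinguishers_corona_cycleGraph_inl hG hm u hxy
  rcases y with v | ⟨v, b⟩
  · rw [distinguishers_comm]
    exact four_le_card_distinguishers_corona_cycleGraph_inl hG hm v hxy.symm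
  obtain rfl | huv := eq_or_ne u v
  · have hab : a ≠ b := by simpa using hxy
    obtain ⟨c, hac, hbc, hcb⟩ := cycleGraph_exists_adj_not_adj hm hab
    obtain ⟨c', hbc', hac', hc'a⟩ := cycleGraph_exists_adj_not_adj hm hab.symm
    exact four_le_card_distinguishers_corona_inr_inr_self hG hab hac hbc hcb hbc' hac' hc'a
  · exact four_le_card_distinguishers_corona_inr_inr_of_ne (H := fun _ => cycleGraph m)
      hG huv a b

end CycleGraph

theorem stmt_8_general {V : Type*} [Fintype V] (G : SimpleGraph V) (hG : G.Connected)
    (m : ℕ) (hm : 5 ≤ m) :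
    kMetricDimensional (corona G (fun _ : V => SimpleGraph.cycleGraph m)) 4 := by
  refine kMetricDimensional_of_le_card_distinguishers
    (fun x y hxy => four_le_card_distinguishers_corona_cycleGraph hG hm hxy) ?_
  obtain ⟨v⟩ := hG.nonempty
  have h01 : (cycleGraph m).Adj ⟨0, by omega⟩ ⟨1, by omega⟩ :=
    cycleGraph_adj_iff_val.mpr (by simp)
  refine ⟨.inr ⟨v, ⟨0, by omega⟩⟩, .inr ⟨v, ⟨1, by omega⟩⟩, by simp, ?_⟩
  calc _ ≤ _ := card_distinguishers_corona_inr_inr_le hG h01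
    _ = 4 := by rw [cycleGraph_degree (by omega), cycleGraph_degree (by omega)]

/-- for `G` connected non-trivial and `m ≥ 5`, the corona `G ⊙ C_m`
(every copy the cycle of order `m`) is 4-metric dimensional. -/
theorem stmt_8 {V : Type*} [Fintype V] [Nontrivial V] (G : SimpleGraph V) (hG : G.Connected)
    (m : ℕ) (hm : 5 ≤ m) :
    kMetricDimensional (corona G (fun _ : V => SimpleGraph.cycleGraph m)) 4 :=
  stmt_8_general G hG m hm
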